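/- For each fixed non-negative integer k and non-negative integer r, the exponential generating function of the r-Stirling numbers of the second kind satisfies sum_{n>=0} S_r(n+r, k+r) t^n / n! = (1/k!) * e^{rt} * (e^t - 1)^k. -/

import Mathlib

open Finset Real

/-- Stirling numbers of the second kind `S(n, k)`. -/
def stirling2 : ℕ → ℕ → ℕ
  | 0, 0 => 1
  | 0, _ + 1 => 0
  | _ + 1, 0 => 0
  | n + 1, k + 1 => (k + 1) * stirling2 n (k + 1) + stirling2 n k

/-- The `r`-Stirling numbers of the second kind `S_r(n, k)` of Broder: the number of
partitions of `{1, …, n}` into `k` non-empty subsets such that `1, …, r` lie in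
distinct subsets (with the convention `S_r(n, k) = 0` for `n < r`). -/
def rStirling (r : ℕ) : ℕ → ℕ → ℕ
  | 0, k => if r = 0 ∧ k = 0 then 1 else 0
  | n + 1, k =>
    if n + 1 < r then 0
    else if n + 1 = r then (if k = r then 1 else 0)
    else
      match k with
      | 0 => 0
      | k + 1 => (k + 1) * rStirling r n (k + 1) + rStirling r n k

/-!
Both `k! S_r(n + r, k + r)` and the `k`-th forward difference at `0` of `y ↦ (y + r)^n` satisfy
the triangular recurrence of the `r`-Stirling numbers; for the forward difference this is a
Leibniz rule for `Δ^k` against the linear factor `y + r`. Forward differences commute with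
summing the exponential series, so the generating function is `Δ^k (y ↦ e^{(y + r) t})` at `0`,
and since `y ↦ e^{y t}` is an additive character this equals `e^{r t} (e^t - 1)^k`.
-/

open fwdDiff Function Nat

section rStirling

variable (r : ℕ)

theorem rStirling_eq_zero_of_lt (n : ℕ) {j : ℕ} (hj : j < r) : rStirling r n j = 0 := by
  induction n generalizing j with
  | zero => exact if_neg (by omega)
  | succ n ih =>
    simp only [rStirling]
    split_ifs with h
    · rfl
    · omega
    · rfl
    · cases j with
      | zero => rfl
      | succ j => simp [ih hj, ih (j := j) (by omega)]

theorem rStirling_succ_succ {n : ℕ} (h : r ≤ n) (j : ℕ) :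
    rStirling r (n + 1) (j + 1) = (j + 1) * rStirling r n (j + 1) + rStirling r n j := by
  rw [rStirling, if_neg (by omega), if_neg (by omega)]

theorem rStirling_self_add (k : ℕ) : rStirling r r (k + r) = if k = 0 then 1 else 0 := by
  cases r <;> simp [rStirling]

theorem rStirling_add_succ_self (n : ℕ) :
    rStirling r (n + 1 + r) r = r * rStirling r (n + r) r := by
  cases r with
  | zero => simp [rStirling]
  | succ m =>
    rw [add_right_comm, rStirling_succ_succ _ (by omega),
      rStirling_eq_zero_of_lt _ _ (Nat.lt_succ_self m)]
    ring

theorem rStirling_add_succ_add_succ (n k : ℕ) :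
    rStirling r (n + 1 + r) (k + 1 + r) =
      (k + 1 + r) * rStirling r (n + r) (k + 1 + r) + rStirling r (n + r) (k + r) := by
  rw [add_right_comm n, add_right_comm k, rStirling_succ_succ _ (by omega)]

end rStirling

section ForwardDifference

variable {R : Type*} [CommRing R]

theorem fwdDiff_iter_succ_add_mul (c : R) (f : R → R) (k : ℕ) (y : R) :
    Δ_[1] ^[k + 1] (fun z ↦ (z + c) * f z) y =
      (y + c + (k + 1)) * Δ_[1] ^[k + 1] f y + (k + 1) * Δ_[1] ^[k] f y := by
  induction k generalizing y with
  | zero =>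
    simp only [zero_add, iterate_one, fwdDiff, cast_zero, iterate_zero, id_eq, one_mul]
    ring
  | succ k ih =>
    rw [iterate_succ_apply', fwdDiff, ih, ih]
    simp only [iterate_succ_apply', fwdDiff]
    push_cast; ring

theorem factorial_mul_rStirling (r n k : ℕ) :
    (k ! : R) * rStirling r (n + r) (k + r) = Δ_[1] ^[k] (fun y : R ↦ (y + r) ^ n) 0 := by
  induction n generalizing k with
  | zero =>
    rw [zero_add, rStirling_self_add]
    rcases k with _ | k
    · simp
    · have hconst : (fun y : R ↦ (y + r) ^ 0) = fun y ↦ y ^ 0 := by simp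
      rw [hconst, fwdDiff_iter_pow_eq_zero_of_lt k.succ_pos]
      simp
  | succ n ih =>
    rcases k with _ | k
    · have h0 := ih 0
      simp only [factorial_zero, cast_one, one_mul, zero_add, iterate_zero, id] at h0
      simp [rStirling_add_succ_self, h0, _root_.pow_succ']
    · have hpow : (fun y : R ↦ (y + r) ^ (n + 1)) = fun y : R ↦ (y + r) * (y + r) ^ n :=
        funext fun y ↦ _root_.pow_succ' _ _
      rw [hpow, fwdDiff_iter_succ_add_mul, ← ih, ← ih, rStirling_add_succ_add_succ,
        factorial_succ]
      push_cast; ring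

end ForwardDifference

theorem HasSum.fwdDiff_iter {ι M G : Type*} [AddCommMonoid M] [AddCommGroup G]
    [TopologicalSpace G] [IsTopologicalAddGroup G] {f : ι → M → G} {g : M → G} (h : M)
    (hf : ∀ y, HasSum (fun i ↦ f i y) (g y)) (k : ℕ) (y : M) :
    HasSum (fun i ↦ Δ_[h] ^[k] (f i) y) (Δ_[h] ^[k] g y) := by
  induction k generalizing y with
  | zero => exact hf y
  | succ k ih =>
    simp only [iterate_succ_apply', fwdDiff]
    exact (ih _).sub (ih _)

theorem Real.fwdDiff_iter_exp_mul (t y : ℝ) (k : ℕ) :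
    Δ_[1] ^[k] (fun z ↦ exp (z * t)) y = (exp t - 1) ^ k * exp (y * t) :=
  let ψ : AddChar ℝ ℝ :=
    { toFun := fun z ↦ exp (z * t)
      map_zero_eq_one' := by simp
      map_add_eq_mul' := fun a b ↦ by rw [add_mul, exp_add] }
  (fwdDiff_addChar_eq ψ y 1 k).trans <| by
    change (exp (1 * t) - 1) ^ k * exp (y * t) = _
    rw [one_mul]

theorem Real.hasSum_fwdDiff_iter_add_pow_mul_div_factorial (x t : ℝ) (k : ℕ) :
    HasSum (fun n ↦ Δ_[1] ^[k] (fun y : ℝ ↦ (y + x) ^ n) 0 * t ^ n / n !)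
      (exp (x * t) * (exp t - 1) ^ k) := by
  have hexp (y : ℝ) :
      HasSum (fun n ↦ ((t ^ n / n !) • fun z : ℝ ↦ (z + x) ^ n) y) (exp ((y + x) * t)) := by
    rw [exp_eq_exp_ℝ]
    refine (NormedSpace.expSeries_div_hasSum_exp ((y + x) * t)).congr_fun fun n ↦ ?_
    change t ^ n / n ! * (y + x) ^ n = ((y + x) * t) ^ n / (n ! : ℝ)
    rw [mul_pow]
    ring
  have hshift : Δ_[1] ^[k] (fun y ↦ exp ((y + x) * t)) 0 = exp (x * t) * (exp t - 1) ^ k :=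
    (fwdDiff_iter_comp_add 1 (fun z ↦ exp (z * t)) x k 0).trans <| by
      rw [Real.fwdDiff_iter_exp_mul, zero_add, mul_comm]
  have hdiff := HasSum.fwdDiff_iter 1 hexp k 0
  simp only [fwdDiff_iter_const_smul, hshift] at hdiff
  refine hdiff.congr_fun fun n ↦ ?_
  rw [Pi.smul_apply, smul_eq_mul]
  ring

theorem rStirling_egf (k r : ℕ) (t : ℝ) :
    HasSum (fun n : ℕ => (rStirling r (n + r) (k + r) : ℝ) * t ^ n / Nat.factorial n)
      (1 / (Nat.factorial k : ℝ) * Real.exp (r * t) * (Real.exp t - 1) ^ k) := by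
  rw [one_div_mul_eq_div, div_mul_eq_mul_div]
  refine ((Real.hasSum_fwdDiff_iter_add_pow_mul_div_factorial r t k).div_const _).congr_fun
    fun n ↦ ?_
  rw [← factorial_mul_rStirling]
  field_simp
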